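/- The double cross product multiplication m_D is associative with unit 1_A ⊗ 1_H: as k-linear maps, m_D ∘ (m_D ⊗ id_{A⊗H}) = m_D ∘ (id_{A⊗H} ⊗ m_D), and m_D((1_A ⊗ 1_H) ⊗ u) = u = m_D(u ⊗ (1_A ⊗ 1_H)) for all u ∈ A ⊗ H. -/

import Mathlib

/-!
Because `j_A`, `j_H` and the multiplication of `X` are coalgebra maps, `ξ` is an isomorphism of
coalgebras, so `ζ = ξ⁻¹ ∘ μ_X ∘ (j_H ⊗ j_A)` is a coalgebra map. A coalgebra map `φ` into a tensor
product `A ⊗ H` is recovered from its components as `c ↦ Σ (id ⊗ ε)(φ c₁) ⊗ (ε ⊗ id)(φ c₂)`,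
hence `ζ(h ⊗ a) = Σ α(h₁ ⊗ a₁) ⊗ β(h₂ ⊗ a₂)`. With this, `ξ (m_D (u ⊗ v)) = ξ u · ξ v`:
`m_D` is the multiplication of `X` transported along `ξ`, and so inherits associativity and unit.
-/

open TensorProduct

noncomputable section

universe u

variable {k A H X : Type u} [Field k]
  [Ring A] [Ring H] [Ring X]
  [Bialgebra k A] [Bialgebra k H] [Bialgebra k X]

/-- ζ : H ⊗ A → A ⊗ H, ζ(h ⊗ a) = ξ⁻¹(j_H(h) · j_A(a)). -/
def zetaF (jA : A →ₐc[k] X) (jH : H →ₐc[k] X) (ξ : (A ⊗[k] H) ≃ₗ[k] X) :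
    H ⊗[k] A →ₗ[k] A ⊗[k] H :=
  ξ.symm.toLinearMap ∘ₗ LinearMap.mul' k X ∘ₗ
    TensorProduct.map (jH : H →ₗ[k] X) (jA : A →ₗ[k] X)

/-- α := (id_A ⊗ ε_H) ∘ ζ. -/
def alphaF (jA : A →ₐc[k] X) (jH : H →ₐc[k] X) (ξ : (A ⊗[k] H) ≃ₗ[k] X) :
    H ⊗[k] A →ₗ[k] A :=
  (TensorProduct.rid k A).toLinearMap ∘ₗ
    TensorProduct.map LinearMap.id Coalgebra.counit ∘ₗ zetaF jA jH ξ

/-- β := (ε_A ⊗ id_H) ∘ ζ. -/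
def betaF (jA : A →ₐc[k] X) (jH : H →ₐc[k] X) (ξ : (A ⊗[k] H) ≃ₗ[k] X) :
    H ⊗[k] A →ₗ[k] H :=
  (TensorProduct.lid k H).toLinearMap ∘ₗ
    TensorProduct.map Coalgebra.counit LinearMap.id ∘ₗ zetaF jA jH ξ

/-- The map H ⊗ A → A ⊗ H, h ⊗ a ↦ Σ α(h₁ ⊗ a₁) ⊗ β(h₂ ⊗ a₂). -/
def zetaAB (jA : A →ₐc[k] X) (jH : H →ₐc[k] X) (ξ : (A ⊗[k] H) ≃ₗ[k] X) :
    H ⊗[k] A →ₗ[k] A ⊗[k] H :=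
  TensorProduct.map (alphaF jA jH ξ) (betaF jA jH ξ) ∘ₗ
    (Coalgebra.comul : H ⊗[k] A →ₗ[k] (H ⊗[k] A) ⊗[k] (H ⊗[k] A))

/-- The double cross product multiplication m_D on A ⊗ H:
m_D((a ⊗ h) ⊗ (a' ⊗ h')) = Σ a·α(h₁ ⊗ a'₁) ⊗ β(h₂ ⊗ a'₂)·h'. -/
def mD (jA : A →ₐc[k] X) (jH : H →ₐc[k] X) (ξ : (A ⊗[k] H) ≃ₗ[k] X) :
    (A ⊗[k] H) ⊗[k] (A ⊗[k] H) →ₗ[k] A ⊗[k] H :=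
  TensorProduct.map (LinearMap.mul' k A) LinearMap.id ∘ₗ
  (TensorProduct.assoc k A A H).symm.toLinearMap ∘ₗ
  TensorProduct.map LinearMap.id
    (TensorProduct.map LinearMap.id (LinearMap.mul' k H) ∘ₗ
     (TensorProduct.assoc k A H H).toLinearMap ∘ₗ
     TensorProduct.map (zetaAB jA jH ξ) LinearMap.id ∘ₗ
     (TensorProduct.assoc k H A H).symm.toLinearMap) ∘ₗ
  (TensorProduct.assoc k A H (A ⊗[k] H)).toLinearMap

section CoalgebraTensorProduct

open Coalgebra

variable {R C M N : Type*} [CommSemiring R] [AddCommMonoid M] [Module R M] [Coalgebra R M]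
  [AddCommMonoid N] [Module R N] [Coalgebra R N] [AddCommMonoid C] [Module R C] [Coalgebra R C]

lemma TensorProduct.map_rid_lid_counit_comp_comul :
    TensorProduct.map ((TensorProduct.rid R M).toLinearMap ∘ₗ TensorProduct.map LinearMap.id counit)
      ((TensorProduct.lid R N).toLinearMap ∘ₗ TensorProduct.map counit LinearMap.id) ∘ₗ
      (comul : M ⊗[R] N →ₗ[R] (M ⊗[R] N) ⊗[R] (M ⊗[R] N)) = LinearMap.id := by
  have hsplit : TensorProduct.map
        ((TensorProduct.rid R M).toLinearMap ∘ₗ TensorProduct.map LinearMap.id counit)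
        ((TensorProduct.lid R N).toLinearMap ∘ₗ TensorProduct.map counit LinearMap.id) ∘ₗ
        (AlgebraTensorModule.tensorTensorTensorComm R R R R M M N N).toLinearMap
      = TensorProduct.map ((TensorProduct.rid R M).toLinearMap ∘ₗ counit.lTensor M)
          ((TensorProduct.lid R N).toLinearMap ∘ₗ counit.rTensor N) := by
    ext; simp [smul_tmul', smul_smul, mul_comm]
  ext a b
  simpa using congr($hsplit (comul a ⊗ₜ comul b))

lemma CoalgHom.map_rid_lid_counit_comp_comp_comul (φ : C →ₗc[R] M ⊗[R] N) :
    TensorProduct.map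
        ((TensorProduct.rid R M).toLinearMap ∘ₗ TensorProduct.map LinearMap.id counit ∘ₗ
          (φ : C →ₗ[R] M ⊗[R] N))
        ((TensorProduct.lid R N).toLinearMap ∘ₗ TensorProduct.map counit LinearMap.id ∘ₗ
          (φ : C →ₗ[R] M ⊗[R] N)) ∘ₗ comul = (φ : C →ₗ[R] M ⊗[R] N) := by
  have h := congr(TensorProduct.map
    ((TensorProduct.rid R M).toLinearMap ∘ₗ TensorProduct.map LinearMap.id counit)
    ((TensorProduct.lid R N).toLinearMap ∘ₗ TensorProduct.map counit LinearMap.id) ∘ₗ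
    $(φ.map_comp_comul))
  rw [← LinearMap.comp_assoc, ← TensorProduct.map_comp, ← LinearMap.comp_assoc,
    TensorProduct.map_rid_lid_counit_comp_comul, LinearMap.id_comp] at h
  exact h

end CoalgebraTensorProduct

section DoubleCrossProduct

variable (jA : A →ₐc[k] X) (jH : H →ₐc[k] X) (ξ : (A ⊗[k] H) ≃ₗ[k] X)

lemma coe_mulCoalgHom_comp_map (hξ : ∀ (a : A) (h : H), ξ (a ⊗ₜ[k] h) = jA a * jH h) :
    ⇑((Bialgebra.mulCoalgHom k X).comp
      (Coalgebra.TensorProduct.map (jA : A →ₗc[k] X) (jH : H →ₗc[k] X))) = ξ := by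
  suffices h : ((Bialgebra.mulCoalgHom k X).comp
      (Coalgebra.TensorProduct.map (jA : A →ₗc[k] X) (jH : H →ₗc[k] X)) : A ⊗[k] H →ₗ[k] X) =
      ξ.toLinearMap from congr($h)
  ext a h
  simp [hξ]

def xiCoalgEquiv (hξ : ∀ (a : A) (h : H), ξ (a ⊗ₜ[k] h) = jA a * jH h) : A ⊗[k] H ≃ₗc[k] X :=
  CoalgEquiv.ofBijective (f := (Bialgebra.mulCoalgHom k X).comp
      (Coalgebra.TensorProduct.map (jA : A →ₗc[k] X) (jH : H →ₗc[k] X)))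
    (coe_mulCoalgHom_comp_map jA jH ξ hξ ▸ ξ.bijective)

lemma coe_xiCoalgEquiv (hξ : ∀ (a : A) (h : H), ξ (a ⊗ₜ[k] h) = jA a * jH h) :
    ⇑(xiCoalgEquiv jA jH ξ hξ) = ξ :=
  coe_mulCoalgHom_comp_map jA jH ξ hξ

def zetaCoalgHom (hξ : ∀ (a : A) (h : H), ξ (a ⊗ₜ[k] h) = jA a * jH h) :
    H ⊗[k] A →ₗc[k] A ⊗[k] H :=
  ((xiCoalgEquiv jA jH ξ hξ).symm : X →ₗc[k] A ⊗[k] H).comp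
    ((Bialgebra.mulCoalgHom k X).comp
      (Coalgebra.TensorProduct.map (jH : H →ₗc[k] X) (jA : A →ₗc[k] X)))

lemma toLinearMap_zetaCoalgHom (hξ : ∀ (a : A) (h : H), ξ (a ⊗ₜ[k] h) = jA a * jH h) :
    (zetaCoalgHom jA jH ξ hξ : H ⊗[k] A →ₗ[k] A ⊗[k] H) = zetaF jA jH ξ := by
  ext h a
  apply ξ.injective
  simp only [zetaF]
  conv_lhs => rw [← coe_xiCoalgEquiv jA jH ξ hξ]
  simp [zetaCoalgHom]

lemma zetaAB_eq_zetaF (hξ : ∀ (a : A) (h : H), ξ (a ⊗ₜ[k] h) = jA a * jH h) :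
    zetaAB jA jH ξ = zetaF jA jH ξ := by
  simp only [zetaAB, alphaF, betaF, ← toLinearMap_zetaCoalgHom jA jH ξ hξ]
  exact CoalgHom.map_rid_lid_counit_comp_comp_comul _

lemma xi_mul_tmul_mul (hξ : ∀ (a : A) (h : H), ξ (a ⊗ₜ[k] h) = jA a * jH h)
    (a : A) (w : A ⊗[k] H) (h : H) :
    ξ (TensorProduct.map (LinearMap.mul' k A) LinearMap.id
        ((TensorProduct.assoc k A A H).symm
          (a ⊗ₜ TensorProduct.map LinearMap.id (LinearMap.mul' k H)
            (TensorProduct.assoc k A H H (w ⊗ₜ h)))))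
      = jA a * ξ w * jH h := by
  induction w using TensorProduct.induction_on with
  | zero => simp
  | tmul a' h' => simp [hξ, mul_assoc]
  | add w w' hw hw' => simp only [add_tmul, tmul_add, map_add, hw, hw', mul_add, add_mul]

lemma mD_tmul (hξ : ∀ (a : A) (h : H), ξ (a ⊗ₜ[k] h) = jA a * jH h) (u v : A ⊗[k] H) :
    mD jA jH ξ (u ⊗ₜ v) = ξ.symm (ξ u * ξ v) := by
  suffices h : ξ.toLinearMap ∘ₗ mD jA jH ξ = LinearMap.mul' k X ∘ₗ TensorProduct.map ξ ξ by
    rw [ξ.eq_symm_apply]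
    simpa using congr($h (u ⊗ₜ v))
  ext a h a' h'
  have hζ : ξ (zetaF jA jH ξ (h ⊗ₜ a')) = jH h * jA a' := by simp [zetaF]
  simp [mD, zetaAB_eq_zetaF jA jH ξ hξ, xi_mul_tmul_mul jA jH ξ hξ, hζ, hξ, mul_assoc]

end DoubleCrossProduct

/-- m_D is associative with unit 1_A ⊗ 1_H. -/
theorem mD_assoc_unit (jA : A →ₐc[k] X) (jH : H →ₐc[k] X)
    (ξ : (A ⊗[k] H) ≃ₗ[k] X)
    (hξ : ∀ (a : A) (h : H), ξ (a ⊗ₜ[k] h) = jA a * jH h) :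
    mD jA jH ξ ∘ₗ TensorProduct.map (mD jA jH ξ) LinearMap.id
      = mD jA jH ξ ∘ₗ TensorProduct.map LinearMap.id (mD jA jH ξ) ∘ₗ
          (TensorProduct.assoc k (A ⊗[k] H) (A ⊗[k] H) (A ⊗[k] H)).toLinearMap ∧
    ∀ u : A ⊗[k] H,
      mD jA jH ξ (((1 : A) ⊗ₜ[k] (1 : H)) ⊗ₜ[k] u) = u ∧
      mD jA jH ξ (u ⊗ₜ[k] ((1 : A) ⊗ₜ[k] (1 : H))) = u := by
  have hone : ξ ((1 : A) ⊗ₜ[k] (1 : H)) = 1 := by simp [hξ]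
  refine ⟨TensorProduct.ext_threefold fun u v w => ?_, fun u => ⟨?_, ?_⟩⟩
  · simp [mD_tmul jA jH ξ hξ, mul_assoc]
  · simp [mD_tmul jA jH ξ hξ, hone]
  · simp [mD_tmul jA jH ξ hξ, hone]

end
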